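/- arXiv:math/0511269 — 8 statements merged into one kernel-verified Lean document; each statement's English description precedes it below -/
import Mathlib

section
/- If α_n(t), n ∈ ℤ≥0, are continuous functions solving the Schur flow equations for t > 0 with |α_n(0)| < 1 for all n, then |α_n(t)| < 1 for all n and all t > 0. -/
/-!
Along a solution, `g = 1 - |α_n|²` obeys the scalar linear equation `g' = c g` with
`c = -2 Re(conj α_n · (α_{n+1} - α_{n-1}))`, a coefficient continuous on `[0, t]`.
The integrating factor gives `g t = g 0 · exp (∫₀ᵗ c) > 0`.
-/

open Complex ComplexConjugate Set intervalIntegral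

theorem eq_mul_exp_integral_of_hasDerivAt_mul {g c : ℝ → ℝ} {a b : ℝ} (hab : a ≤ b)
    (hg : ContinuousOn g (Icc a b)) (hc : ContinuousOn c (Icc a b))
    (hderiv : ∀ s ∈ Ioo a b, HasDerivAt g (c s * g s) s) :
    g b = g a * Real.exp (∫ s in a..b, c s) := by
  rcases hab.eq_or_lt with rfl | hab
  · simp
  set C : ℝ → ℝ := fun u => ∫ s in a..u, c s
  have hC_cont : ContinuousOn C (Icc a b) := by
    simpa [uIcc_of_le hab.le] using
      continuousOn_primitive_interval (hc.integrableOn_Icc.mono_set (uIcc_of_le hab.le).subset)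
  have hC_deriv : ∀ s ∈ Ioo a b, HasDerivAt C (c s) s := fun s hs =>
    integral_hasDerivAt_right
      ((hc.mono (Icc_subset_Icc_right hs.2.le)).intervalIntegrable_of_Icc hs.1.le)
      ((hc.mono Ioo_subset_Icc_self).stronglyMeasurableAtFilter isOpen_Ioo s hs)
      (hc.continuousAt (Icc_mem_nhds hs.1 hs.2))
  obtain ⟨s, -, hslope⟩ :=
    exists_hasDerivAt_eq_slope (fun u => g u * Real.exp (-C u)) (fun _ => 0) hab
      (hg.mul hC_cont.neg.rexp) fun s hs =>
        ((hderiv s hs).fun_mul (hC_deriv s hs).neg.exp).congr_deriv (by ring)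
  have hconst : g b * Real.exp (-C b) = g a * Real.exp (-C a) :=
    sub_eq_zero.mp ((div_eq_zero_iff.mp hslope.symm).resolve_right (sub_ne_zero.mpr hab.ne'))
  rw [show C a = 0 from integral_same, neg_zero, Real.exp_zero, mul_one] at hconst
  rw [← hconst, mul_assoc, ← Real.exp_add, neg_add_cancel, Real.exp_zero, mul_one]

theorem hasDerivAt_one_sub_norm_sq {f : ℝ → ℂ} {t : ℝ} {w : ℂ}
    (hf : HasDerivAt f ((1 - ‖f t‖ ^ 2) * w) t) :
    HasDerivAt (fun s => 1 - ‖f s‖ ^ 2) (-2 * (conj (f t) * w).re * (1 - ‖f t‖ ^ 2)) t := by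
  have hcoe : (1 - ‖f t‖ ^ 2 : ℂ) = ((1 - ‖f t‖ ^ 2 : ℝ) : ℂ) := by push_cast; ring
  refine (hf.norm_sq.const_sub 1).congr_deriv ?_
  rw [hcoe, Complex.inner, mul_assoc, re_ofReal_mul, mul_comm w]
  ring

theorem stmt2 (α : ℤ → ℝ → ℂ)
    (hcont : ∀ n : ℤ, 0 ≤ n → ContinuousOn (α n) (Set.Ici 0))
    (hneg : ∀ t, α (-1) t = -1)
    (hflow : ∀ n : ℤ, 0 ≤ n → ∀ t : ℝ, 0 < t →
      HasDerivAt (α n) ((1 - ‖α n t‖ ^ 2) * (α (n + 1) t - α (n - 1) t)) t)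
    (hinit : ∀ n : ℤ, 0 ≤ n → ‖α n 0‖ < 1) :
    ∀ n : ℤ, 0 ≤ n → ∀ t : ℝ, 0 < t → ‖α n t‖ < 1 := by
  intro n hn t ht
  have hcont_pred : ContinuousOn (α (n - 1)) (Ici 0) := by
    rcases hn.eq_or_lt with rfl | hpos
    · simpa [funext hneg] using continuousOn_const
    · exact hcont _ (by omega)
  have hcont_n : ContinuousOn (α n) (Icc 0 t) := (hcont n hn).mono Icc_subset_Ici_self
  have hcoeff : ContinuousOn (fun s => -2 * (conj (α n s) * (α (n + 1) s - α (n - 1) s)).re)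
      (Icc 0 t) :=
    continuous_re.comp_continuousOn ((continuous_conj.comp_continuousOn hcont_n).mul
      (((hcont _ (by omega)).sub hcont_pred).mono Icc_subset_Ici_self)) |>.const_smul (-2 : ℝ)
  have hsol := eq_mul_exp_integral_of_hasDerivAt_mul (g := fun s => 1 - ‖α n s‖ ^ 2) ht.le
    (continuousOn_const.sub (hcont_n.norm.pow 2)) hcoeff
    fun s hs => hasDerivAt_one_sub_norm_sq (hflow n hn s hs.1)
  have hinit_sq := (sq_lt_one_iff₀ (norm_nonneg _)).mpr (hinit n hn)
  have hgap : 0 < 1 - ‖α n t‖ ^ 2 := hsol ▸ mul_pos (by linarith) (Real.exp_pos _)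
  exact (sq_lt_one_iff₀ (norm_nonneg _)).mp (by linarith)
end

section
/- For complex numbers α_n with |α_n| < 1 (n ≥ -1, α_{-1} = -1), set ρ_n = √(1-|α_n|²) and Δ_n = α_{n+1} - α_{n-1}. Then ρ_m²(1 - conj(α_{m+1})·α_{m-1}) - ρ_{m-1}²(1 - conj(α_m)·α_{m-2}) = -α_{m-1}·ρ_m²·conj(Δ_m) - conj(α_m)·ρ_{m-1}²·Δ_{m-1}, and also (ρ_m ρ_{m+1})² - (ρ_{m-2}ρ_{m-1})² + conj(α_{m+1})ρ_m²Δ_m + α_{m-2}ρ_{m-1}²·conj(Δ_{m-1}) equals the same quantity. -/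
open Complex

section SchurFlowDiag

-- `a, b, c, d` play the roles of `α (m-2), α (m-1), α m, α (m+1)`, and `1 - star x * x` of `ρ²`.
variable {R : Type*} [CommRing R] [StarRing R] (a b c d : R)

theorem schurFlow_diag_identity_left :
    (1 - star c * c) * (1 - star d * b) - (1 - star b * b) * (1 - star c * a) =
      -b * (1 - star c * c) * star (d - b) - star c * (1 - star b * b) * (c - a) := by
  rw [star_sub]
  ring

theorem schurFlow_diag_identity_right :
    (1 - star c * c) * (1 - star d * d) - (1 - star a * a) * (1 - star b * b) +
        star d * (1 - star c * c) * (d - b) + a * (1 - star b * b) * star (c - a) =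
      -b * (1 - star c * c) * star (d - b) - star c * (1 - star b * b) * (c - a) := by
  rw [star_sub, star_sub]
  ring

end SchurFlowDiag

theorem Complex.ofReal_one_sub_norm_sq (z : ℂ) :
    ((1 - ‖z‖ ^ 2 : ℝ) : ℂ) = 1 - starRingEnd ℂ z * z := by
  rw [conj_mul']
  push_cast
  rfl

theorem stmt4_general (α : ℤ → ℂ) (m : ℤ)
    (r : ℤ → ℂ) (hr : ∀ n, r n = ((1 - ‖α n‖ ^ 2 : ℝ) : ℂ))
    (Δ : ℤ → ℂ) (hΔ : ∀ n, Δ n = α (n + 1) - α (n - 1)) :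
    (r m * (1 - (starRingEnd ℂ) (α (m + 1)) * α (m - 1)) -
       r (m - 1) * (1 - (starRingEnd ℂ) (α m) * α (m - 2)) =
       -α (m - 1) * r m * (starRingEnd ℂ) (Δ m) -
         (starRingEnd ℂ) (α m) * r (m - 1) * Δ (m - 1)) ∧
    (r m * r (m + 1) - r (m - 2) * r (m - 1) +
       (starRingEnd ℂ) (α (m + 1)) * r m * Δ m +
       α (m - 2) * r (m - 1) * (starRingEnd ℂ) (Δ (m - 1)) =
       -α (m - 1) * r m * (starRingEnd ℂ) (Δ m) -
         (starRingEnd ℂ) (α m) * r (m - 1) * Δ (m - 1)) := by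
  have hshift₁ : m - 1 + 1 = m := by ring
  have hshift₂ : m - 1 - 1 = m - 2 := by ring
  simp only [hr, ofReal_one_sub_norm_sq, hΔ, hshift₁, hshift₂, starRingEnd_apply]
  exact ⟨schurFlow_diag_identity_left _ _ _ _,
    schurFlow_diag_identity_right _ _ _ _⟩

theorem stmt4 (α : ℤ → ℂ) (hneg : α (-1) = -1)
    (hlt : ∀ n : ℤ, 0 ≤ n → ‖α n‖ < 1) (m : ℤ) (hm : 1 ≤ m)
    (r : ℤ → ℂ) (hr : ∀ n, r n = ((1 - ‖α n‖ ^ 2 : ℝ) : ℂ))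
    (Δ : ℤ → ℂ) (hΔ : ∀ n, Δ n = α (n + 1) - α (n - 1)) :
    (r m * (1 - (starRingEnd ℂ) (α (m + 1)) * α (m - 1)) -
       r (m - 1) * (1 - (starRingEnd ℂ) (α m) * α (m - 2)) =
       -α (m - 1) * r m * (starRingEnd ℂ) (Δ m) -
         (starRingEnd ℂ) (α m) * r (m - 1) * Δ (m - 1)) ∧
    (r m * r (m + 1) - r (m - 2) * r (m - 1) +
       (starRingEnd ℂ) (α (m + 1)) * r m * Δ m +
       α (m - 2) * r (m - 1) * (starRingEnd ℂ) (Δ (m - 1)) =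
       -α (m - 1) * r m * (starRingEnd ℂ) (Δ m) -
         (starRingEnd ℂ) (α m) * r (m - 1) * Δ (m - 1)) :=
  stmt4_general α m r hr Δ hΔ
end

section
/- Let μ(t) be a family of probability measures on the unit circle with moments μ_k(t) = ∫ ζ^{-k} dμ(ζ,t), and suppose dμ(ζ,t) = φ(ζ,t) dμ(ζ,0) where φ(ζ,t) = exp(t(ζ+ζ^{-1}))/f(t) and f(t) = ∫ exp(t(ζ+ζ^{-1})) dμ(ζ,0). Then μ_k'(t) = μ_{k-1}(t) + μ_{k+1}(t) - g(t)·μ_k(t) for all k ∈ ℤ, where g(t) = μ_1(t) + μ_{-1}(t). -/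
open Complex MeasureTheory

open scoped ComplexConjugate

/-!
Write `Φ_j(t) = ∫ ζ ^ j e^{t(ζ + ζ̄)} dμ₀(ζ)`, so that `μ_k = Φ_{-k} / Φ_0`. Differentiating under the
integral sign and using `ζ̄ = ζ⁻¹` on the circle gives `Φ_j' = Φ_{j+1} + Φ_{j-1}`; the quotient
rule then yields the recurrence, with `g = Φ_0' / Φ_0 = μ_1 + μ_{-1}`.
-/

noncomputable def besselWeight (t : ℝ) (z : ℂ) : ℂ := exp (t * (z + conj z))

noncomputable def besselIntegral (μ : Measure ℂ) (j : ℤ) (t : ℝ) : ℂ :=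
  ∫ z, z ^ j * besselWeight t z ∂μ

noncomputable def besselMoment (μ : Measure ℂ) (k : ℤ) (t : ℝ) : ℂ :=
  (besselIntegral μ 0 t)⁻¹ * besselIntegral μ (-k) t

theorem besselWeight_eq_ofReal (t : ℝ) (z : ℂ) :
    besselWeight t z = (Real.exp (t * (2 * z.re)) : ℂ) := by
  rw [besselWeight, add_conj, ← ofReal_mul, ← ofReal_exp]

theorem norm_besselWeight (t : ℝ) (z : ℂ) : ‖besselWeight t z‖ = Real.exp (t * (2 * z.re)) := by
  rw [besselWeight_eq_ofReal, norm_real, Real.norm_of_nonneg (Real.exp_pos _).le]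

@[fun_prop]
theorem continuous_besselWeight (t : ℝ) : Continuous (besselWeight t) := by
  unfold besselWeight
  fun_prop

theorem hasDerivAt_besselWeight (t : ℝ) (z : ℂ) :
    HasDerivAt (besselWeight · z) ((z + conj z) * besselWeight t z) t := by
  simpa [besselWeight, mul_comm] using
    ((hasDerivAt_id (t : ℂ)).mul_const (z + conj z)).cexp.comp_ofReal

theorem norm_zpow_mul_besselWeight_le {z : ℂ} (hz : ‖z‖ = 1) (j : ℤ) (t : ℝ) :
    ‖z ^ j * besselWeight t z‖ ≤ Real.exp (2 * |t|) := by
  have hre : |z.re| ≤ 1 := hz ▸ abs_re_le_norm z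
  rw [norm_mul, norm_zpow, hz, one_zpow, one_mul, norm_besselWeight, Real.exp_le_exp]
  calc t * (2 * z.re) ≤ |t * (2 * z.re)| := le_abs_self _
    _ = 2 * |t| * |z.re| := by rw [abs_mul, abs_mul, abs_two]; ring
    _ ≤ 2 * |t| := mul_le_of_le_one_right (by positivity) hre

theorem zpow_mul_add_conj {z : ℂ} (hz : ‖z‖ = 1) (j : ℤ) :
    z ^ j * (z + conj z) = z ^ (j + 1) + z ^ (j - 1) := by
  have hz0 : z ≠ 0 := norm_ne_zero_iff.mp (hz ▸ one_ne_zero)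
  rw [← inv_eq_conj hz, mul_add, zpow_add_one₀ hz0, zpow_sub_one₀ hz0]

section

variable {μ : Measure ℂ} [IsFiniteMeasure μ]

theorem integrable_zpow_mul_besselWeight (hcirc : ∀ᵐ z ∂μ, ‖z‖ = 1) (j : ℤ) (t : ℝ) :
    Integrable (fun z ↦ z ^ j * besselWeight t z) μ := by
  refine (integrable_const (Real.exp (2 * |t|))).mono' ?_ ?_
  · fun_prop
  · filter_upwards [hcirc] with z hz using norm_zpow_mul_besselWeight_le hz j t

theorem hasDerivAt_besselIntegral_under_integral (hcirc : ∀ᵐ z ∂μ, ‖z‖ = 1) (j : ℤ) (t : ℝ) :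
    HasDerivAt (besselIntegral μ j) (∫ z, z ^ j * ((z + conj z) * besselWeight t z) ∂μ) t := by
  have hmeas : Measurable fun z : ℂ ↦ z ^ j * ((z + conj z) * besselWeight t z) := by fun_prop
  refine (hasDerivAt_integral_of_dominated_loc_of_deriv_le
    (F := fun s z ↦ z ^ j * besselWeight s z)
    (F' := fun s z ↦ z ^ j * ((z + conj z) * besselWeight s z))
    (bound := fun _ ↦ 2 * Real.exp (2 * (|t| + 1)))
    (Metric.ball_mem_nhds t one_pos) (.of_forall fun s ↦ ?_)
    (integrable_zpow_mul_besselWeight hcirc j t) hmeas.aestronglyMeasurable ?_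
    (integrable_const _) (.of_forall fun z s _ ↦ ?_)).2
  · exact (integrable_zpow_mul_besselWeight hcirc j s).aestronglyMeasurable
  · filter_upwards [hcirc] with z hz s hs
    have hs' : |s| ≤ |t| + 1 := by
      have := abs_sub_abs_le_abs_sub s t
      rw [Metric.mem_ball, Real.dist_eq] at hs
      linarith
    have hconj : ‖z + conj z‖ ≤ 2 := by
      calc ‖z + conj z‖ ≤ ‖z‖ + ‖conj z‖ := norm_add_le _ _
        _ = 2 := by rw [RCLike.norm_conj, hz]; norm_num
    calc ‖z ^ j * ((z + conj z) * besselWeight s z)‖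
        = ‖z + conj z‖ * ‖z ^ j * besselWeight s z‖ := by simp only [norm_mul]; ring
      _ ≤ 2 * Real.exp (2 * |s|) := by
        gcongr
        exact norm_zpow_mul_besselWeight_le hz j s
      _ ≤ 2 * Real.exp (2 * (|t| + 1)) := by gcongr
  · exact (hasDerivAt_besselWeight s z).const_mul (z ^ j)

theorem hasDerivAt_besselIntegral (hcirc : ∀ᵐ z ∂μ, ‖z‖ = 1) (j : ℤ) (t : ℝ) :
    HasDerivAt (besselIntegral μ j)
      (besselIntegral μ (j + 1) t + besselIntegral μ (j - 1) t) t := by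
  have hsplit : (fun z ↦ z ^ j * ((z + conj z) * besselWeight t z)) =ᵐ[μ]
      fun z ↦ z ^ (j + 1) * besselWeight t z + z ^ (j - 1) * besselWeight t z := by
    filter_upwards [hcirc] with z hz
    rw [← mul_assoc, zpow_mul_add_conj hz, add_mul]
  rw [besselIntegral, besselIntegral, ← integral_add (integrable_zpow_mul_besselWeight hcirc _ t)
    (integrable_zpow_mul_besselWeight hcirc _ t), ← integral_congr_ae hsplit]
  exact hasDerivAt_besselIntegral_under_integral hcirc j t

theorem besselIntegral_zero_ne_zero [NeZero μ] (hcirc : ∀ᵐ z ∂μ, ‖z‖ = 1) (t : ℝ) :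
    besselIntegral μ 0 t ≠ 0 := by
  have hint := (integrable_zpow_mul_besselWeight hcirc 0 t).norm
  simp only [zpow_zero, one_mul, norm_besselWeight] at hint
  simp only [besselIntegral, zpow_zero, one_mul, besselWeight_eq_ofReal]
  rw [integral_complex_ofReal]
  exact ofReal_ne_zero.mpr (integral_exp_pos hint).ne'

theorem hasDerivAt_besselMoment [NeZero μ] (hcirc : ∀ᵐ z ∂μ, ‖z‖ = 1) (k : ℤ) (t : ℝ) :
    HasDerivAt (besselMoment μ k)
      (besselMoment μ (k - 1) t + besselMoment μ (k + 1) t -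
        (besselMoment μ 1 t + besselMoment μ (-1) t) * besselMoment μ k t) t := by
  have hne := besselIntegral_zero_ne_zero hcirc t
  have hquot := (hasDerivAt_besselIntegral hcirc (-k) t).div
    (hasDerivAt_besselIntegral hcirc 0 t) hne
  have hdiv : besselMoment μ k = besselIntegral μ (-k) / besselIntegral μ 0 :=
    funext fun s ↦ inv_mul_eq_div _ _
  rw [hdiv]
  refine hquot.congr_deriv ?_
  simp only [besselMoment, Pi.div_apply, neg_neg, zero_add, zero_sub]
  rw [show -(k - 1) = -k + 1 by ring, show -(k + 1) = -k - 1 by ring]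
  field_simp
  ring

end

theorem stmt7 (μ0 : Measure ℂ) [IsProbabilityMeasure μ0]
    (hcirc : ∀ᵐ z ∂μ0, ‖z‖ = 1)
    (m : ℤ → ℝ → ℂ)
    (hm : ∀ k t, m k t =
      (∫ z, Complex.exp ((t : ℂ) * (z + (starRingEnd ℂ) z)) ∂μ0)⁻¹ *
        ∫ z, z ^ (-k) * Complex.exp ((t : ℂ) * (z + (starRingEnd ℂ) z)) ∂μ0)
    (k : ℤ) (t : ℝ) :
    HasDerivAt (m k) (m (k - 1) t + m (k + 1) t - (m 1 t + m (-1) t) * m k t) t := by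
  obtain rfl : m = besselMoment μ0 := by
    funext k t
    simp only [hm, besselMoment, besselIntegral, besselWeight, zpow_zero, one_mul]
  exact hasDerivAt_besselMoment hcirc k t
end

section
/- I₁(2t)/I₀(2t) → 1 as t → +∞, where I₀, I₁ are the modified Bessel functions of the first kind of orders 0 and 1. -/
/-!
With a_n = t^(2n)/(n!)² and b_n = t^(2n+1)/(n!(n+1)!) the terms of I₀(2t) and I₁(2t), one has
b_n = a_n · t/(n+1) and a_(n+1) = b_n · t/(n+1). AM–GM then gives 2 b_n ≤ a_n + a_(n+1), so
I₁(2t) ≤ I₀(2t); and a_n (t/(n+1) + (n+1)/t) ≥ 2 a_n, which summed using ∑ n a_n = t ∑ b_n reads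
2 I₁(2t) ≥ (2 - 1/t) I₀(2t). Hence 1 - 1/(2t) ≤ I₁(2t)/I₀(2t) ≤ 1.
-/

open Filter Nat

namespace BesselRatio

noncomputable def i0Term (t : ℝ) (n : ℕ) : ℝ := t ^ (2 * n) / (n ! : ℝ) ^ 2

noncomputable def i1Term (t : ℝ) (n : ℕ) : ℝ := t ^ (2 * n + 1) / ((n ! : ℝ) * ((n + 1)! : ℝ))

variable (t : ℝ) (n : ℕ)

lemma i0Term_zero : i0Term t 0 = 1 := by
  simp [i0Term]

lemma i0Term_nonneg : 0 ≤ i0Term t n := by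
  unfold i0Term
  rw [pow_mul]
  positivity

lemma i1Term_eq_i0Term_mul : i1Term t n = i0Term t n * (t / (n + 1)) := by
  unfold i0Term i1Term
  push_cast [factorial_succ]
  field_simp
  ring

lemma i0Term_succ_eq_i1Term_mul : i0Term t (n + 1) = i1Term t n * (t / (n + 1)) := by
  unfold i0Term i1Term
  push_cast [factorial_succ]
  field_simp
  ring

lemma summable_i0Term : Summable (i0Term t) := by
  refine .of_nonneg_of_le (i0Term_nonneg t) (fun n => ?_) (Real.summable_pow_div_factorial (t ^ 2))
  rw [i0Term, pow_mul]
  gcongr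
  exact_mod_cast le_self_pow₀ (one_le_cast.2 n.factorial_pos) two_ne_zero

lemma summable_i1Term : Summable (i1Term t) := by
  refine .of_norm_bounded ((summable_i0Term t).mul_right |t|) (fun n => ?_)
  rw [i1Term_eq_i0Term_mul, norm_mul, Real.norm_of_nonneg (i0Term_nonneg t n)]
  gcongr
  · exact i0Term_nonneg t n
  rw [norm_div, Real.norm_of_nonneg (by positivity : (0 : ℝ) ≤ n + 1)]
  exact div_le_self (abs_nonneg t) (by linarith [n.cast_nonneg (α := ℝ)])

lemma succ_mul_i0Term_succ : ((n : ℝ) + 1) * i0Term t (n + 1) = t * i1Term t n := by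
  rw [i0Term_succ_eq_i1Term_mul]
  field_simp

lemma hasSum_natCast_mul_i0Term : HasSum (fun n : ℕ => n * i0Term t n) (t * ∑' n, i1Term t n) := by
  rw [← hasSum_nat_add_iff' 1]
  simpa [succ_mul_i0Term_succ] using (summable_i1Term t).hasSum.mul_left t

lemma two_mul_i1Term_le : 2 * i1Term t n ≤ i0Term t n + i0Term t (n + 1) := by
  rw [i0Term_succ_eq_i1Term_mul, i1Term_eq_i0Term_mul]
  nlinarith [mul_nonneg (i0Term_nonneg t n) (sq_nonneg (t / (n + 1) - 1))]

lemma two_sub_inv_mul_i0Term_le {t : ℝ} (ht : 0 < t) :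
    (2 - t⁻¹) * i0Term t n ≤ i1Term t n + n * i0Term t n / t := by
  have amgm : 2 ≤ t / (n + 1) + (n + 1) / t := by
    rw [div_add_div _ _ (by positivity) ht.ne', le_div_iff₀ (by positivity)]
    nlinarith [sq_nonneg (t - (n + 1))]
  rw [i1Term_eq_i0Term_mul]
  have h := mul_le_mul_of_nonneg_left amgm (i0Term_nonneg t n)
  field_simp at h ⊢
  nlinarith

lemma two_mul_tsum_i1Term_le : 2 * ∑' n, i1Term t n ≤ 2 * ∑' n, i0Term t n - 1 := by
  have tail : HasSum (fun n => i0Term t (n + 1)) (∑' n, i0Term t n - 1) := by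
    rw [(summable_i0Term t).tsum_eq_zero_add, i0Term_zero, add_sub_cancel_left]
    exact ((summable_nat_add_iff 1).2 (summable_i0Term t)).hasSum
  have := hasSum_le (two_mul_i1Term_le t) ((summable_i1Term t).hasSum.mul_left 2)
    ((summable_i0Term t).hasSum.add tail)
  linarith

lemma two_sub_inv_mul_tsum_i0Term_le {t : ℝ} (ht : 0 < t) :
    (2 - t⁻¹) * ∑' n, i0Term t n ≤ 2 * ∑' n, i1Term t n := by
  have := hasSum_le (two_sub_inv_mul_i0Term_le · ht) ((summable_i0Term t).hasSum.mul_left _)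
    ((summable_i1Term t).hasSum.add ((hasSum_natCast_mul_i0Term t).div_const t))
  rwa [mul_div_cancel_left₀ _ ht.ne', ← two_mul] at this

lemma one_le_tsum_i0Term : 1 ≤ ∑' n, i0Term t n := by
  simpa [i0Term_zero] using (summable_i0Term t).le_tsum 0 (fun n _ => i0Term_nonneg t n)

lemma tsum_i1Term_div_tsum_i0Term_le_one : (∑' n, i1Term t n) / ∑' n, i0Term t n ≤ 1 := by
  have := two_mul_tsum_i1Term_le t
  rw [div_le_one (by linarith [one_le_tsum_i0Term t])]
  linarith

lemma one_sub_inv_le_tsum_i1Term_div_tsum_i0Term {t : ℝ} (ht : 0 < t) :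
    1 - (2 * t)⁻¹ ≤ (∑' n, i1Term t n) / ∑' n, i0Term t n := by
  have := two_sub_inv_mul_tsum_i0Term_le ht
  rw [le_div_iff₀ (by linarith [one_le_tsum_i0Term t]), mul_inv]
  linarith

end BesselRatio

open BesselRatio in
theorem stmt13 :
    Filter.Tendsto (fun t : ℝ =>
      (∑' n : ℕ, t ^ (2 * n + 1) / ((n.factorial : ℝ) * ((n + 1).factorial : ℝ))) /
      (∑' n : ℕ, t ^ (2 * n) / ((n.factorial : ℝ) ^ 2)))
      Filter.atTop (nhds 1) := by
  change Tendsto (fun t => (∑' n, i1Term t n) / ∑' n, i0Term t n) atTop (nhds 1)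
  have lower : Tendsto (fun t : ℝ => 1 - (2 * t)⁻¹) atTop (nhds 1) := by
    simpa using tendsto_const_nhds.sub
      (tendsto_inv_atTop_zero.comp (tendsto_id.const_mul_atTop (two_pos : (0 : ℝ) < 2)))
  refine tendsto_of_tendsto_of_tendsto_of_le_of_le' lower tendsto_const_nhds ?_
    (.of_forall tsum_i1Term_div_tsum_i0Term_le_one)
  filter_upwards [eventually_gt_atTop 0] with t ht
  exact one_sub_inv_le_tsum_i1Term_div_tsum_i0Term ht
end

section
/- Suppose real sequences β_n(t) (n ≥ -1, β_{-1} ≡ -1, |β_n(t)| < 1 for n ≥ 0) satisfy the discrete Painlevé II relation -(n+1)·β_n(t)/(t·(1-β_n(t)²)) = β_{n+1}(t) + β_{n-1}(t) for all t > 0, and suppose lim_{t→∞} β_n(t) = (-1)^n for each n. Then lim_{t→∞} t·(1 - β_n(t)²) = (n+1)/2 for each n ≥ 0. -/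
theorem stmt14 (β : ℤ → ℝ → ℝ)
    (hneg : ∀ t, β (-1) t = -1)
    (hmem : ∀ n : ℤ, 0 ≤ n → ∀ t : ℝ, 0 < t → |β n t| < 1)
    (hP2 : ∀ n : ℤ, 0 ≤ n → ∀ t : ℝ, 0 < t →
      -((n : ℝ) + 1) * β n t / (t * (1 - β n t ^ 2)) = β (n + 1) t + β (n - 1) t)
    (hlim : ∀ n : ℤ, 0 ≤ n →
      Filter.Tendsto (β n) Filter.atTop (nhds ((-1 : ℝ) ^ n)))
    (n : ℤ) (hn : 0 ≤ n) :
    Filter.Tendsto (fun t => t * (1 - β n t ^ 2)) Filter.atTop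
      (nhds (((n : ℝ) + 1) / 2)) := by
  set ε : ℝ := (-1 : ℝ) ^ n with hεdef
  have hε : ε ≠ 0 := by
    apply zpow_ne_zero; norm_num
  have h1 : Filter.Tendsto (β n) Filter.atTop (nhds ε) := hlim n hn
  have h2 : Filter.Tendsto (β (n + 1)) Filter.atTop (nhds (-ε)) := by
    have h := hlim (n + 1) (by omega)
    have : ((-1 : ℝ) ^ (n + 1)) = -ε := by
      rw [hεdef, zpow_add₀ (by norm_num : (-1:ℝ) ≠ 0)]; simp
    rwa [this] at h
  have h3 : Filter.Tendsto (β (n - 1)) Filter.atTop (nhds (-ε)) := by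
    rcases eq_or_lt_of_le hn with h0 | h0
    · have hn0 : n = 0 := h0.symm
      subst hn0
      have : ε = 1 := by simp [hεdef]
      rw [this]
      have : (0:ℤ) - 1 = -1 := by norm_num
      rw [this]
      rw [show β (-1) = fun _ : ℝ => (-1:ℝ) from funext hneg]
      exact tendsto_const_nhds
    · have h := hlim (n - 1) (by omega)
      have : ((-1 : ℝ) ^ (n - 1)) = -ε := by
        rw [hεdef, zpow_sub₀ (by norm_num : (-1:ℝ) ≠ 0)]; simp [div_neg]
      rwa [this] at h
  have hden : Filter.Tendsto (fun t => β (n + 1) t + β (n - 1) t) Filter.atTop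
      (nhds (-ε + -ε)) := h2.add h3
  have hdne : (-ε + -ε) ≠ 0 := by
    intro h; apply hε; linarith [h]
  have hquot : Filter.Tendsto (fun t => -((n : ℝ) + 1) * β n t / (β (n + 1) t + β (n - 1) t))
      Filter.atTop (nhds ((-((n : ℝ) + 1) * ε) / (-ε + -ε))) :=
    (Filter.Tendsto.mul tendsto_const_nhds h1).div hden hdne
  have hval : (-((n : ℝ) + 1) * ε) / (-ε + -ε) = ((n : ℝ) + 1) / 2 := by
    rw [div_eq_div_iff hdne (by norm_num : (2:ℝ) ≠ 0)]; ring
  rw [hval] at hquot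
  refine hquot.congr' ?_
  have hev1 : ∀ᶠ t in Filter.atTop, β (n + 1) t + β (n - 1) t ≠ 0 :=
    hden.eventually_ne hdne
  have hev2 : ∀ᶠ t in Filter.atTop, (0 : ℝ) < t := Filter.eventually_gt_atTop 0
  filter_upwards [hev1, hev2] with t hS ht
  have habs := hmem n hn t ht
  have h1lt : 0 < 1 - β n t ^ 2 := by
    have := abs_lt.mp habs
    nlinarith [this.1, this.2]
  have hD : t * (1 - β n t ^ 2) ≠ 0 := by positivity
  have hd := hP2 n hn t ht
  rw [div_eq_iff hD] at hd
  field_simp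
  linarith [hd]
end

section
/- Suppose α_n(t) solve the Schur flow on [0,∞) with |α_n(t)| < 1 and that γ_n := lim_{t→∞} Re(conj(α_n(t))·α_{n-1}(t)) exists for each n (with α_{-1} ≡ -1). Then the sequence γ_n is nondecreasing: γ_n ≤ γ_{n+1} for all n ≥ 0, and -1 ≤ γ_n ≤ 1. -/
/-!
The logarithmic derivative of `ρₙ² = 1 - |αₙ|²` along the flow is `2 Re(ᾱₙαₙ₋₁ - ᾱₙ₊₁αₙ)`,
which tends to `2 (γₙ - γₙ₊₁)`. If `γₙ₊₁ < γₙ`, then `log ρₙ²` would eventually grow at least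
linearly, which is impossible since `ρₙ ≤ 1`. The bounds `|γₙ| ≤ 1` hold because `|αₖ| ≤ 1`.
-/

open Complex Filter

theorem tendsto_atTop_of_hasDerivAt_ge {φ φ' : ℝ → ℝ} {c : ℝ} (hc : 0 < c)
    (hφ : ∀ᶠ t in atTop, HasDerivAt φ (φ' t) t ∧ c ≤ φ' t) :
    Tendsto φ atTop atTop := by
  obtain ⟨T, hT⟩ := eventually_atTop.1 hφ
  have hlin : ∀ t, T ≤ t → φ T + c * (t - T) ≤ φ t := by
    intro t ht
    have hmvt := (convex_Ici T).mul_sub_le_image_sub_of_le_deriv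
      (fun s hs => (hT s hs).1.continuousAt.continuousWithinAt)
      (fun s hs => (hT s (interior_subset hs)).1.differentiableAt.differentiableWithinAt)
      (fun s hs => (hT s (interior_subset hs)).1.deriv ▸ (hT s (interior_subset hs)).2)
      T Set.self_mem_Ici t ht ht
    linarith
  refine tendsto_atTop_mono' atTop (eventually_atTop.2 ⟨T, hlin⟩) ?_
  refine tendsto_atTop_add_const_left _ _ (Tendsto.const_mul_atTop hc ?_)
  exact tendsto_atTop_add_const_right _ _ tendsto_id

theorem re_conj_mul_mem_Icc {z w : ℂ} (hz : ‖z‖ ≤ 1) (hw : ‖w‖ ≤ 1) :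
    (starRingEnd ℂ z * w).re ∈ Set.Icc (-1) 1 := by
  rw [Set.mem_Icc, ← abs_le]
  calc |(starRingEnd ℂ z * w).re| ≤ ‖starRingEnd ℂ z * w‖ := abs_re_le_norm _
    _ = ‖z‖ * ‖w‖ := by rw [norm_mul, RCLike.norm_conj]
    _ ≤ 1 := mul_le_one₀ hz (norm_nonneg _) hw

theorem hasDerivAt_log_one_sub_norm_sq {u : ℝ → ℂ} {a b : ℂ} {t : ℝ} (hu_lt : ‖u t‖ < 1)
    (hu : HasDerivAt u ((1 - ‖u t‖ ^ 2) * (a - b)) t) :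
    HasDerivAt (fun s => Real.log (1 - ‖u s‖ ^ 2))
      (2 * ((starRingEnd ℂ (u t) * b).re - (starRingEnd ℂ a * u t).re)) t := by
  have hρ : 0 < 1 - ‖u t‖ ^ 2 := by nlinarith [norm_nonneg (u t)]
  refine (((hasDerivAt_const t (1 : ℝ)).fun_sub hu.norm_sq).log hρ.ne').congr_deriv ?_
  rw [Complex.inner]
  field_simp
  simp only [mul_re, mul_im, sub_re, sub_im, conj_re, conj_im, one_re, one_im,
    ← ofReal_pow, ofReal_re, ofReal_im]
  ring

theorem stmt15 (α : ℤ → ℝ → ℂ) (γ : ℤ → ℝ)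
    (hneg : ∀ t, α (-1) t = -1)
    (hmem : ∀ n : ℤ, 0 ≤ n → ∀ t : ℝ, 0 ≤ t → ‖α n t‖ < 1)
    (hflow : ∀ n : ℤ, 0 ≤ n → ∀ t : ℝ, 0 ≤ t →
      HasDerivAt (α n) ((1 - ‖α n t‖ ^ 2) * (α (n + 1) t - α (n - 1) t)) t)
    (hγ : ∀ n : ℤ, 0 ≤ n →
      Filter.Tendsto (fun t => ((starRingEnd ℂ) (α n t) * α (n - 1) t).re)
        Filter.atTop (nhds (γ n))) :
    ∀ n : ℤ, 0 ≤ n → γ n ≤ γ (n + 1) ∧ -1 ≤ γ n ∧ γ n ≤ 1 := by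
  have hprev : ∀ n : ℤ, 0 ≤ n → ∀ t : ℝ, 0 ≤ t → ‖α (n - 1) t‖ ≤ 1 := by
    intro n hn t ht
    rcases hn.eq_or_lt with rfl | hpos
    · simp [hneg]
    · exact (hmem (n - 1) (by omega) t ht).le
  intro n hn
  have hγ_mem : γ n ∈ Set.Icc (-1) 1 :=
    isClosed_Icc.mem_of_tendsto (hγ n hn) <| (eventually_ge_atTop 0).mono fun t ht =>
      re_conj_mul_mem_Icc (hmem n hn t ht).le (hprev n hn t ht)
  refine ⟨?_, hγ_mem⟩
  by_contra! hlt
  have hgap : ∀ᶠ t in atTop, (γ n - γ (n + 1)) / 2 ≤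
      ((starRingEnd ℂ) (α n t) * α (n - 1) t).re - ((starRingEnd ℂ) (α (n + 1) t) * α n t).re := by
    have h := (hγ n hn).sub (hγ (n + 1) (by omega))
    simp only [add_sub_cancel_right] at h
    exact h.eventually (eventually_ge_nhds (by linarith))
  have hlog := tendsto_atTop_of_hasDerivAt_ge (c := γ n - γ (n + 1)) (by linarith) <|
    (hgap.and (eventually_ge_atTop 0)).mono fun t ⟨hgap_t, ht⟩ =>
      ⟨hasDerivAt_log_one_sub_norm_sq (hmem n hn t ht) (hflow n hn t ht), by linarith⟩
  obtain ⟨t, hlog_pos, ht⟩ := ((hlog.eventually_gt_atTop 0).and (eventually_ge_atTop 0)).exists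
  have hρ_nonneg : 0 ≤ 1 - ‖α n t‖ ^ 2 := by nlinarith [hmem n hn t ht, norm_nonneg (α n t)]
  have hρ_le : 1 - ‖α n t‖ ^ 2 ≤ 1 := by nlinarith [norm_nonneg (α n t)]
  linarith [Real.log_nonpos hρ_nonneg hρ_le]
end

section
/- Suppose α_n(t) solve the Schur flow with |α_n(t)| < 1 for all t ≥ 0, the limits γ_n = lim_{t→∞} Re(conj(α_n(t))α_{n-1}(t)) exist, γ_n is nondecreasing, and the right-hand sides -(n+1)α_n/(t(1-α_n²)) = α_{n+1} + α_{n-1} of the discrete Painlevé II relation are bounded in t for each n (real case). If γ_k < γ_{k+1} for some k, then 1 - α_k(t)² ≤ C e^{-δt} for some C, δ > 0, which forces |α_k(t)|/(t(1-α_k(t)²)) → +∞ as t → ∞ — a contradiction. Hence all γ_n are equal. -/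
/-!
Suppose `γ k < γ (k + 1)`. Then `f = 1 - α k ^ 2` satisfies
`f' = -2 f (α (k + 1) α k - α k α (k - 1)) ≤ -c f` for large `t`, with `c = γ (k + 1) - γ k`,
so `f` decays like `exp (-c t)` and in particular `t f → 0`, forcing `α k ^ 2 → 1`.
On the other hand the discrete Painlevé II relation with `|α (k ± 1)| ≤ 1` gives
`|α k| ≤ 2 t f`, forcing `α k → 0`. Hence `γ` is nonincreasing as well as nondecreasing.
-/

open Filter Real Set Topology

lemma antitoneOn_mul_exp_of_hasDerivAt_le {f f' : ℝ → ℝ} {c T : ℝ}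
    (hf : ∀ t ∈ Ici T, HasDerivAt f (f' t) t) (hle : ∀ t ∈ Ioi T, f' t ≤ -c * f t) :
    AntitoneOn (fun t => f t * exp (c * t)) (Ici T) := by
  have hderiv : ∀ t ∈ Ici T, HasDerivAt (fun t => f t * exp (c * t))
      ((f' t + c * f t) * exp (c * t)) t := fun t ht => by
    have hexp : HasDerivAt (fun t => exp (c * t)) (exp (c * t) * c) t := by
      simpa using ((hasDerivAt_id t).const_mul c).exp
    exact ((hf t ht).mul hexp).congr_deriv (by ring)
  refine antitoneOn_of_hasDerivWithinAt_nonpos (f' := fun t => (f' t + c * f t) * exp (c * t))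
    (convex_Ici T) (fun t ht => (hderiv t ht).continuousAt.continuousWithinAt)
    (fun t ht => (hderiv t (interior_subset ht)).hasDerivWithinAt) (fun t ht => ?_)
  rw [interior_Ici] at ht
  exact mul_nonpos_of_nonpos_of_nonneg (by linarith [hle t ht]) (exp_pos _).le

lemma tendsto_mul_zero_of_mul_exp_le {f : ℝ → ℝ} {c C : ℝ} (hc : 0 < c)
    (hf : ∀ᶠ t in atTop, 0 ≤ f t) (hbound : ∀ᶠ t in atTop, f t * exp (c * t) ≤ C) :
    Tendsto (fun t => t * f t) atTop (𝓝 0) := by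
  have hdecay : Tendsto (fun t : ℝ => C * (t ^ (1 : ℝ) * exp (-c * t))) atTop (𝓝 0) := by
    simpa using (tendsto_rpow_mul_exp_neg_mul_atTop_nhds_zero 1 c hc).const_mul C
  refine tendsto_of_tendsto_of_tendsto_of_le_of_le' tendsto_const_nhds hdecay ?_ ?_
  · filter_upwards [hf, eventually_ge_atTop 0] with t hft ht using mul_nonneg ht hft
  · filter_upwards [hbound, eventually_ge_atTop 0] with t hbt ht
    have hft : f t = f t * exp (c * t) * exp (-c * t) := by
      rw [mul_assoc, ← exp_add]; simp
    rw [rpow_one, hft]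
    nlinarith [mul_le_mul_of_nonneg_right hbt (mul_nonneg ht (exp_pos (-c * t)).le)]

lemma tendsto_mul_one_sub_sq_of_tendsto_gap {a aPrev aNext : ℝ → ℝ} {L : ℝ}
    (hflow : ∀ t, 0 < t → HasDerivAt a ((1 - a t ^ 2) * (aNext t - aPrev t)) t)
    (hmem : ∀ t, 0 < t → |a t| ≤ 1)
    (hgap : Tendsto (fun t => aNext t * a t - a t * aPrev t) atTop (𝓝 L)) (hL : 0 < L) :
    Tendsto (fun t => t * (1 - a t ^ 2)) atTop (𝓝 0) := by
  obtain ⟨T₀, hT₀⟩ := eventually_atTop.mp (hgap.eventually (eventually_ge_nhds (half_lt_self hL)))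
  set T := max T₀ 1
  have hTpos : 0 < T := lt_of_lt_of_le one_pos (le_max_right _ _)
  have hf0 : ∀ t, 0 < t → 0 ≤ 1 - a t ^ 2 := fun t ht => by
    nlinarith [abs_le.mp (hmem t ht)]
  have hanti : AntitoneOn (fun t => (1 - a t ^ 2) * exp (L * t)) (Ici T) := by
    refine antitoneOn_mul_exp_of_hasDerivAt_le
      (f' := fun t => -(2 * a t * ((1 - a t ^ 2) * (aNext t - aPrev t)))) (fun t ht => ?_)
      (fun t ht => ?_)
    · exact ((hflow t (hTpos.trans_le ht)).pow 2).const_sub 1 |>.congr_deriv (by simp)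
    · have hgapt := hT₀ t ((le_max_left _ _).trans (le_of_lt ht))
      nlinarith [hf0 t (hTpos.trans ht)]
  refine tendsto_mul_zero_of_mul_exp_le (C := (1 - a T ^ 2) * exp (L * T)) hL ?_ ?_
  · filter_upwards [eventually_gt_atTop 0] with t ht using hf0 t ht
  · filter_upwards [eventually_ge_atTop T] with t ht using hanti self_mem_Ici ht ht

lemma not_tendsto_mul_one_sub_sq_of_abs_le {a : ℝ → ℝ} {K : ℝ}
    (hbound : ∀ᶠ t in atTop, |a t| ≤ K * (t * (1 - a t ^ 2))) :
    ¬ Tendsto (fun t => t * (1 - a t ^ 2)) atTop (𝓝 0) := by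
  intro hlim
  have ha : Tendsto a atTop (𝓝 0) := by
    refine squeeze_zero_norm' hbound ?_
    simpa using hlim.const_mul K
  have hone : Tendsto (fun t => 1 - a t ^ 2) atTop (𝓝 1) := by
    simpa using (ha.pow 2).const_sub 1
  have hzero : Tendsto (fun t => 1 - a t ^ 2) atTop (𝓝 0) := by
    refine (by simpa using hlim.mul tendsto_inv_atTop_zero :
      Tendsto (fun t => t * (1 - a t ^ 2) * t⁻¹) atTop (𝓝 0)).congr' ?_
    filter_upwards [eventually_gt_atTop 0] with t ht
    field_simp
  exact one_ne_zero (tendsto_nhds_unique hone hzero)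

lemma abs_le_of_discretePainleveII {n t a b c : ℝ} (hn : 0 ≤ n) (ht : 0 < t) (ha : |a| < 1)
    (hb : |b| ≤ 1) (hc : |c| ≤ 1) (h : -(n + 1) * a / (t * (1 - a ^ 2)) = b + c) :
    |a| ≤ 2 * (t * (1 - a ^ 2)) := by
  have hpos : 0 < t * (1 - a ^ 2) := mul_pos ht (by nlinarith [abs_lt.mp ha])
  rw [div_eq_iff hpos.ne'] at h
  calc |a| ≤ (n + 1) * |a| := le_mul_of_one_le_left (abs_nonneg a) (by linarith)
    _ = |b + c| * (t * (1 - a ^ 2)) := by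
      rw [← abs_of_pos hpos, ← abs_mul, ← h, abs_mul, abs_neg, abs_of_nonneg (by linarith : 0 ≤ n + 1)]
    _ ≤ 2 * (t * (1 - a ^ 2)) := by
      gcongr
      linarith [abs_add_le b c]

lemma Int.eq_of_forall_nonneg_succ_eq {β : Type*} {γ : ℤ → β}
    (h : ∀ k, 0 ≤ k → γ (k + 1) = γ k) {m n : ℤ} (hm : 0 ≤ m) (hn : 0 ≤ n) : γ m = γ n := by
  have hzero : ∀ k : ℕ, γ k = γ 0 := fun k => by
    induction k with
    | zero => rfl
    | succ k ih => rw [Nat.cast_succ, h k k.cast_nonneg, ih]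
  lift m to ℕ using hm
  lift n to ℕ using hn
  rw [hzero m, hzero n]

theorem stmt16 (α : ℤ → ℝ → ℝ) (γ : ℤ → ℝ)
    (hneg : ∀ t, α (-1) t = -1)
    (hmem : ∀ n : ℤ, 0 ≤ n → ∀ t : ℝ, 0 ≤ t → |α n t| < 1)
    (hflow : ∀ n : ℤ, 0 ≤ n → ∀ t : ℝ, 0 < t →
      HasDerivAt (α n) ((1 - α n t ^ 2) * (α (n + 1) t - α (n - 1) t)) t)
    (hP2 : ∀ n : ℤ, 0 ≤ n → ∀ t : ℝ, 0 < t →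
      -((n : ℝ) + 1) * α n t / (t * (1 - α n t ^ 2)) = α (n + 1) t + α (n - 1) t)
    (hγ : ∀ n : ℤ, 0 ≤ n →
      Filter.Tendsto (fun t => α n t * α (n - 1) t) Filter.atTop (nhds (γ n)))
    (hmono : ∀ n : ℤ, 0 ≤ n → γ n ≤ γ (n + 1)) :
    ∀ m n : ℤ, 0 ≤ m → 0 ≤ n → γ m = γ n := by
  have hprev : ∀ n : ℤ, 0 ≤ n → ∀ t : ℝ, 0 ≤ t → |α (n - 1) t| ≤ 1 := fun n hn t ht => by
    rcases hn.eq_or_lt with rfl | hpos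
    · simp [hneg t]
    · exact (hmem (n - 1) (by omega) t ht).le
  have hstep : ∀ k : ℤ, 0 ≤ k → γ (k + 1) = γ k := by
    intro k hk
    refine le_antisymm ?_ (hmono k hk)
    by_contra! hlt
    have hgap := (hγ (k + 1) (by omega)).sub (hγ k hk)
    simp only [add_sub_cancel_right] at hgap
    refine not_tendsto_mul_one_sub_sq_of_abs_le (K := 2) ?_
      (tendsto_mul_one_sub_sq_of_tendsto_gap (hflow k hk) (fun t ht => (hmem k hk t ht.le).le)
        hgap (sub_pos.mpr hlt))
    filter_upwards [eventually_gt_atTop 0] with t ht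
    exact abs_le_of_discretePainleveII (Int.cast_nonneg_iff.mpr hk) ht (hmem k hk t ht.le)
      (hmem (k + 1) (by omega) t ht.le).le (hprev k hk t ht.le) (hP2 k hk t ht)
  exact fun m n hm hn => Int.eq_of_forall_nonneg_succ_eq hstep hm hn
end

section
/- Let w : 𝕋 → ℝ be positive with log w integrable, and define the Szegő function D(z,μ) = exp((1/2)∫_𝕋 (ζ+z)/(ζ-z) · log w(ζ) dm(ζ)) for |z| < 1. If w_t(ζ) = c(t)·exp(t(ζ+ζ^{-1}))·w(ζ) with c(t) > 0 chosen so ∫ w_t dm = 1, then D(z, μ_t) = √(c(t))·e^{tz}·D(z, μ₀) for |z|<1; in particular the ratios D(z,μ_t)/D(0,μ_t) satisfy D(z,μ_t)/D(0,μ_t) = e^{tz}·D(z,μ₀)/D(0,μ₀). -/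
/-!
On the circle the Herglotz kernel `K x = (e^{ix} + z) / (e^{ix} - z)` is `h (e^{-ix})` with
`h u = (1 + z u) / (1 - z u)`, holomorphic near the closed unit disc. After the substitution
`x ↦ 2π - x` the mean value property gives `∫ K = 2π h 0 = 2π`, and writing `cos x` through
`e^{±ix}` it gives `∫ K cos = 2π z`. As `log w_t = log c + 2t cos + log w`, the Szegő exponent
of `w_t` is that of `w` plus `(log c) / 2 + t z`.
-/

open Complex MeasureTheory Metric intervalIntegral
open scoped Real

theorem DiffContOnCl.integral_comp_exp_mul_I {E : Type*} [NormedAddCommGroup E]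
    [NormedSpace ℂ E] [CompleteSpace E] {f : ℂ → E} (hf : DiffContOnCl ℂ f (ball 0 1)) :
    ∫ x in (0:ℝ)..2 * π, f (exp (x * I)) = (2 * π) • f 0 := by
  have h := (abs_one (α := ℝ) ▸ hf).circleAverage
  rw [Real.circleAverage_def] at h
  simp only [circleMap_zero, ofReal_one, one_mul] at h
  rw [← h, smul_inv_smul₀ (by positivity)]

theorem integral_comp_exp_neg_mul_I {E : Type*} [NormedAddCommGroup E] [NormedSpace ℝ E]
    (f : ℂ → E) :
    ∫ x in (0:ℝ)..2 * π, f (exp (-x * I)) = ∫ x in (0:ℝ)..2 * π, f (exp (x * I)) := by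
  have h (x : ℝ) : exp (-x * I) = exp (↑(2 * π - x) * I) := by
    rw [ofReal_sub, sub_mul, Complex.exp_sub, ofReal_mul, ofReal_ofNat, exp_two_pi_mul_I,
      neg_mul, exp_neg, one_div]
  simp_rw [h]
  rw [integral_comp_sub_left (fun x : ℝ => f (exp (x * I))), sub_self, sub_zero]

lemma norm_exp_neg_mul_I (x : ℝ) : ‖exp (-x * I)‖ = 1 := by
  rw [← ofReal_neg, norm_exp_ofReal_mul_I]

lemma one_sub_mul_ne_zero_of_norm_lt_one {z u : ℂ} (hz : ‖z‖ < 1) (hu : ‖u‖ ≤ 1) :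
    1 - z * u ≠ 0 := by
  refine sub_ne_zero.mpr (ne_of_apply_ne norm (ne_of_gt ?_))
  calc ‖z * u‖ = ‖z‖ * ‖u‖ := norm_mul z u
    _ < 1 := by nlinarith [norm_nonneg z, norm_nonneg u]
    _ = ‖(1 : ℂ)‖ := norm_one.symm

lemma diffContOnCl_div_one_sub_mul {z : ℂ} (hz : ‖z‖ < 1) {p : ℂ → ℂ}
    (hp : Differentiable ℂ p) : DiffContOnCl ℂ (fun u => p u / (1 - z * u)) (ball 0 1) := by
  refine DifferentiableOn.diffContOnCl ?_
  rw [closure_ball 0 one_ne_zero]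
  exact hp.differentiableOn.div (by fun_prop) fun u hu =>
    one_sub_mul_ne_zero_of_norm_lt_one hz (mem_closedBall_zero_iff.mp hu)

noncomputable def herglotzKernel (z : ℂ) (x : ℝ) : ℂ :=
  (exp (x * I) + z) / (exp (x * I) - z)

lemma herglotzKernel_eq (z : ℂ) (x : ℝ) :
    herglotzKernel z x = (1 + z * exp (-x * I)) / (1 - z * exp (-x * I)) := by
  rw [herglotzKernel, neg_mul, exp_neg, ← div_eq_mul_inv,
    ← div_div_div_cancel_right₀ (exp_ne_zero (x * I)), add_div, sub_div,
    div_self (exp_ne_zero _)]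

section HerglotzKernel

variable {z : ℂ}

lemma continuous_herglotzKernel (hz : ‖z‖ < 1) : Continuous (herglotzKernel z) := by
  simp_rw [funext (herglotzKernel_eq z)]
  exact Continuous.div (by fun_prop) (by fun_prop) fun x =>
    one_sub_mul_ne_zero_of_norm_lt_one hz (norm_exp_neg_mul_I x).le

theorem integral_herglotzKernel (hz : ‖z‖ < 1) :
    ∫ x in (0:ℝ)..2 * π, herglotzKernel z x = 2 * π := by
  simp_rw [herglotzKernel_eq]
  rw [integral_comp_exp_neg_mul_I (fun u => (1 + z * u) / (1 - z * u))]
  exact (diffContOnCl_div_one_sub_mul hz (p := fun u => 1 + z * u) (by fun_prop)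
    ).integral_comp_exp_mul_I.trans (by simp)

theorem integral_herglotzKernel_mul_cos (hz : ‖z‖ < 1) :
    ∫ x in (0:ℝ)..2 * π, herglotzKernel z x * Real.cos x = 2 * π * z := by
  set F : ℂ → ℂ := fun u => (u * (1 + z * u) / 2 + z) / (1 - z * u)
  have hF : DiffContOnCl ℂ F (ball 0 1) := diffContOnCl_div_one_sub_mul hz (by fun_prop)
  have hsplit (x : ℝ) :
      herglotzKernel z x * Real.cos x = F (exp (-x * I)) + exp (x * I) / 2 := by
    have hinv : exp (x * I) = (exp (-x * I))⁻¹ := by rw [neg_mul, exp_neg, inv_inv]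
    have hu := exp_ne_zero (-x * I)
    have hzu := one_sub_mul_ne_zero_of_norm_lt_one hz (norm_exp_neg_mul_I x).le
    rw [herglotzKernel_eq, ofReal_cos, Complex.cos, hinv]
    generalize exp (-x * I) = u at hu hzu ⊢
    simp only [F]
    field_simp
    ring
  have hFint : IntervalIntegrable (fun x : ℝ => F (exp (-x * I))) volume 0 (2 * π) :=
    (hF.continuousOn_ball.comp_continuous (by fun_prop) fun x =>
      mem_closedBall_zero_iff.mpr (norm_exp_neg_mul_I x).le).intervalIntegrable _ _
  have hmean : ∫ x in (0:ℝ)..2 * π, exp (x * I) / 2 = 0 :=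
    ((differentiable_id.div_const (2 : ℂ)).diffContOnCl (s := ball 0 1)
      ).integral_comp_exp_mul_I.trans (by simp)
  simp_rw [hsplit]
  rw [intervalIntegral.integral_add hFint (Continuous.intervalIntegrable (by fun_prop) _ _),
    integral_comp_exp_neg_mul_I F, hF.integral_comp_exp_mul_I, hmean]
  simp [F]

lemma intervalIntegrable_herglotzKernel_mul_ofReal (hz : ‖z‖ < 1) {f : ℝ → ℝ} {a b : ℝ}
    (hf : IntervalIntegrable f volume a b) :
    IntervalIntegrable (fun x => herglotzKernel z x * f x) volume a b := by
  have hf' : IntervalIntegrable (fun x => (f x : ℂ)) volume a b := by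
    rw [intervalIntegrable_iff] at hf ⊢
    exact hf.ofReal
  exact hf'.continuousOn_mul (continuous_herglotzKernel hz).continuousOn

theorem integral_herglotzKernel_mul_log_tilt (hz : ‖z‖ < 1) {w : ℝ → ℝ}
    (hw : ∀ x, w x ≠ 0) (hlog : IntervalIntegrable (fun x => Real.log (w x)) volume 0 (2 * π))
    {c : ℝ} (hc : c ≠ 0) (t : ℝ) :
    ∫ x in (0:ℝ)..2 * π,
        herglotzKernel z x * Real.log (c * Real.exp (2 * t * Real.cos x) * w x) =
      2 * π * Real.log c + 2 * t * (2 * π * z) +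
        ∫ x in (0:ℝ)..2 * π, herglotzKernel z x * Real.log (w x) := by
  have hK := (continuous_herglotzKernel hz).intervalIntegrable (μ := volume) 0 (2 * π)
  have hKcos : IntervalIntegrable (fun x => herglotzKernel z x * Real.cos x) volume 0 (2 * π) :=
    ((continuous_herglotzKernel hz).mul (by fun_prop)).intervalIntegrable _ _
  have hsplit (x : ℝ) :
      herglotzKernel z x * Real.log (c * Real.exp (2 * t * Real.cos x) * w x) =
        Real.log c * herglotzKernel z x + 2 * t * (herglotzKernel z x * Real.cos x) +
          herglotzKernel z x * Real.log (w x) := by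
    rw [Real.log_mul (mul_ne_zero hc (Real.exp_pos _).ne') (hw x), Real.log_mul hc
      (Real.exp_pos _).ne', Real.log_exp]
    push_cast
    ring
  simp_rw [hsplit]
  rw [intervalIntegral.integral_add ((hK.const_mul _).add (hKcos.const_mul _))
      (intervalIntegrable_herglotzKernel_mul_ofReal hz hlog),
    intervalIntegral.integral_add (hK.const_mul _) (hKcos.const_mul _),
    intervalIntegral.integral_const_mul, intervalIntegral.integral_const_mul,
    integral_herglotzKernel hz, integral_herglotzKernel_mul_cos hz]
  ring

end HerglotzKernel

noncomputable def szegoFunction (g : ℝ → ℝ) (z : ℂ) : ℂ :=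
  exp (1 / 2 * (((2 * π)⁻¹ : ℝ) : ℂ) *
    ∫ x in (0:ℝ)..2 * π, herglotzKernel z x * Real.log (g x))

theorem szegoFunction_tilt {z : ℂ} (hz : ‖z‖ < 1) {w : ℝ → ℝ} (hw : ∀ x, w x ≠ 0)
    (hlog : IntervalIntegrable (fun x => Real.log (w x)) volume 0 (2 * π))
    {c : ℝ} (hc : 0 < c) (t : ℝ) :
    szegoFunction (fun x => c * Real.exp (2 * t * Real.cos x) * w x) z =
      √c * exp (t * z) * szegoFunction w z := by
  have hsqrt : (√c : ℂ) = exp (Real.log c / 2) := by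
    rw [Real.sqrt_eq_rpow, Real.rpow_def_of_pos hc, ofReal_exp]
    push_cast
    ring_nf
  rw [szegoFunction, szegoFunction, integral_herglotzKernel_mul_log_tilt hz hw hlog hc.ne' t,
    hsqrt, ← exp_add, ← exp_add]
  congr 1
  push_cast
  field_simp

theorem stmt18_general (w : ℝ → ℝ) (hw : ∀ x, 0 < w x)
    (hlog : IntervalIntegrable (fun x => Real.log (w x)) MeasureTheory.volume 0 (2 * Real.pi))
    (c : ℝ → ℝ) (hc : ∀ t, 0 < c t)
    (D : (ℝ → ℝ) → ℂ → ℂ)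
    (hD : ∀ g z, D g z = Complex.exp ((1 / 2) * (((2 * Real.pi)⁻¹ : ℝ) : ℂ) *
      ∫ x in (0:ℝ)..(2 * Real.pi),
        ((Complex.exp ((x : ℂ) * Complex.I) + z) /
            (Complex.exp ((x : ℂ) * Complex.I) - z)) *
          ((Real.log (g x) : ℝ) : ℂ)))
    (t : ℝ) (z : ℂ) (hz : ‖z‖ < 1) :
    D (fun x => c t * Real.exp (2 * t * Real.cos x) * w x) z =
        (Real.sqrt (c t) : ℂ) * Complex.exp ((t : ℂ) * z) * D w z ∧
      D (fun x => c t * Real.exp (2 * t * Real.cos x) * w x) z /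
          D (fun x => c t * Real.exp (2 * t * Real.cos x) * w x) 0 =
        Complex.exp ((t : ℂ) * z) * (D w z / D w 0) := by
  obtain rfl : D = szegoFunction := funext₂ hD
  have htilt {u : ℂ} (hu : ‖u‖ < 1) :=
    szegoFunction_tilt hu (fun x => (hw x).ne') hlog (hc t) t
  refine ⟨htilt hz, ?_⟩
  have hsqrt : (√(c t) : ℂ) ≠ 0 := ofReal_ne_zero.mpr (Real.sqrt_pos.mpr (hc t)).ne'
  rw [htilt hz, htilt (norm_zero.trans_lt one_pos), mul_zero, exp_zero, mul_one,
    mul_assoc, mul_div_mul_left _ _ hsqrt, mul_div_assoc]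

theorem stmt18 (w : ℝ → ℝ) (hw : ∀ x, 0 < w x)
    (hlog : IntervalIntegrable (fun x => Real.log (w x)) MeasureTheory.volume 0 (2 * Real.pi))
    (c : ℝ → ℝ) (hc : ∀ t, 0 < c t)
    (hnorm : ∀ t, (2 * Real.pi)⁻¹ *
      ∫ x in (0:ℝ)..(2 * Real.pi), c t * Real.exp (2 * t * Real.cos x) * w x = 1)
    (D : (ℝ → ℝ) → ℂ → ℂ)
    (hD : ∀ g z, D g z = Complex.exp ((1 / 2) * (((2 * Real.pi)⁻¹ : ℝ) : ℂ) *
      ∫ x in (0:ℝ)..(2 * Real.pi),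
        ((Complex.exp ((x : ℂ) * Complex.I) + z) /
            (Complex.exp ((x : ℂ) * Complex.I) - z)) *
          ((Real.log (g x) : ℝ) : ℂ)))
    (t : ℝ) (z : ℂ) (hz : ‖z‖ < 1) :
    D (fun x => c t * Real.exp (2 * t * Real.cos x) * w x) z =
        (Real.sqrt (c t) : ℂ) * Complex.exp ((t : ℂ) * z) * D w z ∧
      D (fun x => c t * Real.exp (2 * t * Real.cos x) * w x) z /
          D (fun x => c t * Real.exp (2 * t * Real.cos x) * w x) 0 =
        Complex.exp ((t : ℂ) * z) * (D w z / D w 0) :=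
  stmt18_general w hw hlog c hc D hD t z hz
end
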